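/- arXiv:1612.06265 — 6 statements merged into one kernel-verified Lean document; each statement's English description precedes it below -/
import Mathlib

section
/- Let f be convex differentiable with L-Lipschitz gradient, P₁ proper closed convex, P₂ convex continuous, and F = f + P₁ - P₂. Consider one step of pDCAe: given x^t, x^{t-1}, β_t ∈ [0,1), ξ^t ∈ ∂P₂(x^t), set y^t = x^t + β_t(x^t - x^{t-1}) and x^{t+1} = argmin_y { ⟨∇f(y^t) - ξ^t, y⟩ + (L/2)‖y - y^t‖² + P₁(y) }. Then F(x^{t+1}) ≤ F(x^t) + (L/2)β_t²‖x^t - x^{t-1}‖² - (L/2)‖x^{t+1} - x^t‖². -/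
open scoped RealInnerProductSpace

section aux
variable {E : Type*} [NormedAddCommGroup E] [InnerProductSpace ℝ E] [CompleteSpace E]

lemma line_hasDerivAt (f : E → ℝ) (f' : E → E) (hdiff : ∀ x, HasGradientAt f (f' x) x)
    (x v : E) (t : ℝ) :
    HasDerivAt (fun s : ℝ => f (x + s • v)) ⟪f' (x + t • v), v⟫ t := by
  have hc : HasDerivAt (fun s : ℝ => x + s • v) v t := by
    simpa using ((hasDerivAt_id t).smul_const v).const_add x
  have hf := (hasGradientAt_iff_hasFDerivAt.1 (hdiff (x + t • v)))
  have := hf.comp_hasDerivAt t hc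
  simpa [InnerProductSpace.toDual_apply_apply, Function.comp_def] using this

lemma grad_convex_le (f : E → ℝ) (g : E) (x y : E)
    (hconv : ConvexOn ℝ Set.univ f) (hx : HasGradientAt f g x) :
    f x + ⟪g, y - x⟫ ≤ f y := by
  set v := y - x with hv
  have hd : HasDerivAt (fun s : ℝ => f (x + s • v)) ⟪g, v⟫ 0 := by
    have hc : HasDerivAt (fun s : ℝ => x + s • v) v 0 := by
      simpa using ((hasDerivAt_id (0:ℝ)).smul_const v).const_add x
    have hf := hasGradientAt_iff_hasFDerivAt.1 hx
    have hf' : HasFDerivAt f ((InnerProductSpace.toDual ℝ E) g) (x + (0:ℝ) • v) := by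
      simpa using hf
    have := hf'.comp_hasDerivAt 0 hc
    simpa [InnerProductSpace.toDual_apply_apply, Function.comp_def] using this
  have hslope : Filter.Tendsto (slope (fun s : ℝ => f (x + s • v)) 0) (nhdsWithin 0 {(0:ℝ)}ᶜ)
      (nhds ⟪g, v⟫) := hasDerivAt_iff_tendsto_slope.1 hd
  have hslope' := hslope.mono_left (nhdsWithin_mono _ (by intro t ht; exact ne_of_gt ht : Set.Ioi (0:ℝ) ⊆ {(0:ℝ)}ᶜ))
  have hev : ∀ᶠ t in nhdsWithin (0:ℝ) (Set.Ioi 0),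
      slope (fun s : ℝ => f (x + s • v)) 0 t ≤ f y - f x := by
    filter_upwards [Ioc_mem_nhdsGT_of_mem (by constructor <;> norm_num : (0:ℝ) ∈ Set.Ico (0:ℝ) 1)] with t ht
    obtain ⟨ht0, ht1⟩ := ht
    have hcomb : x + t • v = (1 - t) • x + t • y := by
      rw [hv]; module
    have := hconv.2 (Set.mem_univ x) (Set.mem_univ y) (by linarith : (0:ℝ) ≤ 1 - t)
      (le_of_lt ht0) (by ring)
    rw [← hcomb] at this
    rw [slope_def_field]
    simp only [zero_smul, add_zero, sub_zero] at this ⊢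
    rw [div_le_iff₀ ht0]
    simp only [smul_eq_mul] at this
    nlinarith [this]
  have := le_of_tendsto hslope' hev
  simpa only [zero_smul, add_zero] using by linarith [this]

lemma descent_lemma (L : ℝ) (hL : 0 ≤ L) (f : E → ℝ) (f' : E → E)
    (hdiff : ∀ x, HasGradientAt f (f' x) x) (hlip : LipschitzWith L.toNNReal f') (x y : E) :
    f y ≤ f x + ⟪f' x, y - x⟫ + L / 2 * ‖y - x‖ ^ 2 := by
  set v := y - x with hv
  set φ : ℝ → ℝ := fun t => f (x + t • v) - t * ⟪f' x, v⟫ - L / 2 * t ^ 2 * ‖v‖ ^ 2 with hφdef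
  have hφ : ∀ t : ℝ, HasDerivAt φ (⟪f' (x + t • v), v⟫ - ⟪f' x, v⟫ - L * t * ‖v‖ ^ 2) t := by
    intro t
    have h1 := line_hasDerivAt f f' hdiff x v t
    have h2 : HasDerivAt (fun t : ℝ => t * ⟪f' x, v⟫) ⟪f' x, v⟫ t := by
      simpa using (hasDerivAt_id t).mul_const ⟪f' x, v⟫
    have h3 : HasDerivAt (fun t : ℝ => L / 2 * t ^ 2 * ‖v‖ ^ 2) (L * t * ‖v‖ ^ 2) t := by
      have : HasDerivAt (fun t : ℝ => t ^ 2) (2 * t) t := by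
        simpa using hasDerivAt_pow 2 t
      have := (this.const_mul (L / 2)).mul_const (‖v‖ ^ 2)
      exact this.congr_deriv (by ring)
    exact (h1.sub h2).sub h3
  have hanti : AntitoneOn φ (Set.Icc 0 1) := by
    refine antitoneOn_of_deriv_nonpos (convex_Icc 0 1) ?_ ?_ ?_
    · exact fun t _ => ((hφ t).continuousAt).continuousWithinAt
    · exact fun t _ => ((hφ t).differentiableAt).differentiableWithinAt
    · intro t ht
      rw [interior_Icc] at ht
      rw [(hφ t).deriv]
      have hcs : ⟪f' (x + t • v) - f' x, v⟫ ≤ ‖f' (x + t • v) - f' x‖ * ‖v‖ :=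
        real_inner_le_norm _ _
      have hlipb : ‖f' (x + t • v) - f' x‖ ≤ L * (t * ‖v‖) := by
        have := hlip.dist_le_mul (x + t • v) x
        rw [dist_eq_norm] at this
        have h2 : dist (x + t • v) x = t * ‖v‖ := by
          rw [dist_eq_norm]
          simp [norm_smul, abs_of_pos ht.1]
        rw [h2] at this
        simpa [Real.coe_toNNReal L hL] using this
      have hinner : ⟪f' (x + t • v), v⟫ - ⟪f' x, v⟫ = ⟪f' (x + t • v) - f' x, v⟫ := by
        rw [inner_sub_left]
      rw [hinner]
      nlinarith [norm_nonneg v, hcs, hlipb, mul_le_mul_of_nonneg_right hlipb (norm_nonneg v)]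
  have h01 := hanti (Set.left_mem_Icc.2 zero_le_one) (Set.right_mem_Icc.2 zero_le_one) zero_le_one
  simp only [hφdef] at h01
  simp only [zero_smul, add_zero, one_smul] at h01
  have hxy : x + v = y := by rw [hv]; abel
  rw [hxy] at h01
  nlinarith [h01]

lemma comb_norm_sq (a b : E) (t : ℝ) :
    ‖a + t • (b - a)‖ ^ 2 = (1 - t) * ‖a‖ ^ 2 + t * ‖b‖ ^ 2 - t * (1 - t) * ‖b - a‖ ^ 2 := by
  have h : ∀ u : E, ‖u‖ ^ 2 = ⟪u, u⟫ := fun u => (real_inner_self_eq_norm_sq u).symm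
  rw [h, h, h, h]
  simp only [inner_add_left, inner_add_right, inner_sub_left, inner_sub_right,
    real_inner_smul_left, real_inner_smul_right]
  rw [real_inner_comm b a]
  ring
end aux

set_option maxHeartbeats 1000000 in
theorem stmt2 {n : ℕ} (L : ℝ) (hL : 0 < L)
    (f : EuclideanSpace ℝ (Fin n) → ℝ)
    (f' : EuclideanSpace ℝ (Fin n) → EuclideanSpace ℝ (Fin n))
    (hconv : ConvexOn ℝ Set.univ f)
    (hdiff : ∀ x, HasGradientAt f (f' x) x)
    (hlip : LipschitzWith L.toNNReal f')
    (P₁ P₂ : EuclideanSpace ℝ (Fin n) → ℝ)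
    (hP₁conv : ConvexOn ℝ Set.univ P₁) (hP₁lsc : LowerSemicontinuous P₁)
    (hP₂conv : ConvexOn ℝ Set.univ P₂) (hP₂cont : Continuous P₂)
    (β : ℝ) (hβ : β ∈ Set.Ico (0 : ℝ) 1)
    (xprev xt ξ : EuclideanSpace ℝ (Fin n))
    (hξ : ∀ y, P₂ xt + ⟪ξ, y - xt⟫ ≤ P₂ y)
    (yt xnext : EuclideanSpace ℝ (Fin n))
    (hyt : yt = xt + β • (xt - xprev))
    (hmin : ∀ y, ⟪f' yt - ξ, xnext⟫ + L / 2 * ‖xnext - yt‖ ^ 2 + P₁ xnext ≤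
      ⟪f' yt - ξ, y⟫ + L / 2 * ‖y - yt‖ ^ 2 + P₁ y) :
    f xnext + P₁ xnext - P₂ xnext ≤
      f xt + P₁ xt - P₂ xt + L / 2 * β ^ 2 * ‖xt - xprev‖ ^ 2
        - L / 2 * ‖xnext - xt‖ ^ 2 := by
  obtain ⟨hβ0, hβ1⟩ := hβ
  set g := f' yt - ξ with hg
  -- strong convexity of the subproblem objective
  have hsc : ⟪g, xnext⟫ + L / 2 * ‖xnext - yt‖ ^ 2 + P₁ xnext + L / 2 * ‖xnext - xt‖ ^ 2 ≤
      ⟪g, xt⟫ + L / 2 * ‖xt - yt‖ ^ 2 + P₁ xt := by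
    set c := L / 2 * ‖xnext - xt‖ ^ 2 with hc
    have hc0 : 0 ≤ c := by positivity
    refine le_of_forall_pos_le_add ?_
    intro ε hε
    show ⟪g, xnext⟫ + L / 2 * ‖xnext - yt‖ ^ 2 + P₁ xnext + c ≤
        ⟪g, xt⟫ + L / 2 * ‖xt - yt‖ ^ 2 + P₁ xt + ε
    rcases eq_or_lt_of_le hc0 with hceq | hcpos
    · have := hmin xt
      linarith [this, hceq.symm.le]
    · set t := min 1 (ε / c) with ht
      have ht0 : 0 < t := lt_min one_pos (div_pos hε hcpos)
      have ht1 : t ≤ 1 := min_le_left _ _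
      have htc : t * c ≤ ε := by
        calc t * c ≤ ε / c * c := mul_le_mul_of_nonneg_right (min_le_right _ _) hc0
        _ = ε := div_mul_cancel₀ ε (ne_of_gt hcpos)
      set z := xnext + t • (xt - xnext) with hz
      have hnorm : ‖z - yt‖ ^ 2 = (1 - t) * ‖xnext - yt‖ ^ 2 + t * ‖xt - yt‖ ^ 2
          - t * (1 - t) * ‖(xt - yt) - (xnext - yt)‖ ^ 2 := by
        have h1 : z - yt = (xnext - yt) + t • ((xt - yt) - (xnext - yt)) := by
          rw [hz]; module
        rw [h1, comb_norm_sq]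
      have hnn : (xt - yt) - (xnext - yt) = xt - xnext := by abel
      rw [hnn] at hnorm
      have hP : P₁ z ≤ (1 - t) * P₁ xnext + t * P₁ xt := by
        have hcomb : z = (1 - t) • xnext + t • xt := by rw [hz]; module
        rw [hcomb]
        exact hP₁conv.2 (Set.mem_univ _) (Set.mem_univ _) (by linarith) (le_of_lt ht0) (by ring)
      have hinner : ⟪g, z⟫ = (1 - t) * ⟪g, xnext⟫ + t * ⟪g, xt⟫ := by
        have hcomb : z = (1 - t) • xnext + t • xt := by rw [hz]; module
        rw [hcomb, inner_add_right, real_inner_smul_right, real_inner_smul_right]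
      have hQ := hmin z
      rw [hinner, hnorm] at hQ
      have hnxt : ‖xt - xnext‖ ^ 2 = ‖xnext - xt‖ ^ 2 := by rw [norm_sub_rev]
      rw [hnxt] at hQ
      -- derive: t * (lhs) ≤ t * (rhs) - L/2 * t*(1-t)*‖xnext-xt‖²
      have step : t * (⟪g, xnext⟫ + L / 2 * ‖xnext - yt‖ ^ 2 + P₁ xnext) ≤
          t * (⟪g, xt⟫ + L / 2 * ‖xt - yt‖ ^ 2 + P₁ xt) - L / 2 * (t * (1 - t)) * ‖xnext - xt‖ ^ 2 := by
        nlinarith [hQ, hP, hnxt]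
      have step2 : ⟪g, xnext⟫ + L / 2 * ‖xnext - yt‖ ^ 2 + P₁ xnext ≤
          ⟪g, xt⟫ + L / 2 * ‖xt - yt‖ ^ 2 + P₁ xt - (1 - t) * c := by
        rw [hc]
        have := (mul_le_mul_iff_of_pos_left ht0).1 (by nlinarith [step] :
          t * (⟪g, xnext⟫ + L / 2 * ‖xnext - yt‖ ^ 2 + P₁ xnext) ≤
          t * (⟪g, xt⟫ + L / 2 * ‖xt - yt‖ ^ 2 + P₁ xt - (1 - t) * (L / 2 * ‖xnext - xt‖ ^ 2)))
        linarith [this]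
      nlinarith [step2, htc]
  -- descent lemma
  have h1 : f xnext ≤ f yt + ⟪f' yt, xnext - yt⟫ + L / 2 * ‖xnext - yt‖ ^ 2 :=
    descent_lemma L (le_of_lt hL) f f' hdiff hlip yt xnext
  -- convexity gradient inequality
  have h2 : f yt + ⟪f' yt, xt - yt⟫ ≤ f xt :=
    grad_convex_le f (f' yt) yt xt hconv (hdiff yt)
  -- subgradient of P₂
  have h3 : P₂ xt + ⟪ξ, xnext - xt⟫ ≤ P₂ xnext := hξ xnext
  -- norm of xt - yt
  have h5 : ‖xt - yt‖ ^ 2 = β ^ 2 * ‖xt - xprev‖ ^ 2 := by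
    have : xt - yt = (-β) • (xt - xprev) := by rw [hyt]; module
    rw [this, norm_smul]
    simp [abs_of_nonneg hβ0]
    ring
  simp only [hg, inner_sub_left, inner_sub_right] at hsc h1 h2 h3
  rw [h5] at hsc
  linarith [hsc, h1, h2, h3]
end

section
/- Let {x^t} be generated by pDCAe for a level-bounded objective F = f + P₁ - P₂ with extrapolation parameters β_t ∈ [0,1) and sup_t β_t < 1. Then the sequence {x^t} is bounded. -/
/-!
One step of pDCAe decreases the merit function `F(xᵗ) + L/2 ‖xᵗ - xᵗ⁻¹‖²`: the subproblem is
`L`-strongly convex, which turns minimality of `xᵗ⁺¹` into a gain of `L/2 ‖xᵗ⁺¹ - xᵗ‖²`; the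
descent lemma for `f`, the gradient inequality for `f` and the subgradient inequality for `P₂` then
compare `F(xᵗ⁺¹)` with `F(xᵗ)` up to `L/2 ‖xᵗ - yᵗ‖² = L/2 βₜ² ‖xᵗ - xᵗ⁻¹‖²`. As `βₜ ≤ 1`, all
iterates lie in the level set `{F ≤ F(x⁰)}`, which is bounded.
-/

open scoped RealInnerProductSpace
open Filter Topology

section Gradient

variable {E : Type*} [NormedAddCommGroup E] [InnerProductSpace ℝ E] [CompleteSpace E]
  {f : E → ℝ} {f' : E → E}

lemma HasGradientAt.hasDerivAt_add_smul {g a v : E} {t : ℝ} (hf : HasGradientAt f g (a + t • v)) :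
    HasDerivAt (fun s : ℝ => f (a + s • v)) ⟪g, v⟫ t := by
  have hline : HasDerivAt (fun s : ℝ => a + s • v) v t := by
    simpa using ((hasDerivAt_id t).smul_const v).const_add a
  exact (hasGradientAt_iff_hasFDerivAt.mp hf).comp_hasDerivAt t hline

lemma ConvexOn.add_inner_gradient_le (hconv : ConvexOn ℝ Set.univ f)
    (hdiff : ∀ x, HasGradientAt f (f' x) x) (a b : E) :
    f a + ⟪f' a, b - a⟫ ≤ f b := by
  have hline : ConvexOn ℝ Set.univ (fun s : ℝ => f (a + s • (b - a))) := by
    have hparam : (fun s : ℝ => f (a + s • (b - a))) = f ∘ AffineMap.lineMap a b := by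
      funext s
      simp [AffineMap.lineMap_apply, add_comm]
    simpa [hparam] using hconv.comp_affineMap (AffineMap.lineMap a b)
  have hderiv : HasDerivAt (fun s : ℝ => f (a + s • (b - a))) ⟪f' a, b - a⟫ 0 :=
    (hdiff (a + (0 : ℝ) • (b - a))).hasDerivAt_add_smul.congr_deriv (by simp)
  have hslope := hline.le_slope_of_hasDerivAt (Set.mem_univ 0) (Set.mem_univ 1) zero_lt_one hderiv
  simp only [slope_def_field, zero_smul, add_zero, one_smul, add_sub_cancel] at hslope
  linarith

lemma le_add_inner_add_sq_of_lipschitzWith_gradient {L : ℝ} (hL : 0 ≤ L)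
    (hdiff : ∀ x, HasGradientAt f (f' x) x) (hlip : LipschitzWith L.toNNReal f') (a b : E) :
    f b ≤ f a + ⟪f' a, b - a⟫ + L / 2 * ‖b - a‖ ^ 2 := by
  set v := b - a
  set φ : ℝ → ℝ := fun s => f (a + s • v) - s * ⟪f' a, v⟫ - L / 2 * s ^ 2 * ‖v‖ ^ 2
  have hφ : ∀ s : ℝ, HasDerivAt φ (⟪f' (a + s • v), v⟫ - ⟪f' a, v⟫ - L * s * ‖v‖ ^ 2) s := by
    intro s
    have hquad := ((hasDerivAt_pow 2 s).const_mul (L / 2)).mul_const (‖v‖ ^ 2)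
    have hlin := (hasDerivAt_id s).mul_const ⟪f' a, v⟫
    refine (((hdiff _).hasDerivAt_add_smul.sub hlin).sub hquad).congr_deriv ?_
    simp only [one_mul, Nat.cast_ofNat]
    ring
  have hanti : AntitoneOn φ (Set.Icc 0 1) := by
    refine antitoneOn_of_deriv_nonpos (convex_Icc 0 1)
      (HasDerivAt.continuousOn fun s _ => hφ s)
      (fun s _ => (hφ s).differentiableAt.differentiableWithinAt) ?_
    intro s hs
    rw [interior_Icc] at hs
    have hgrad : ‖f' (a + s • v) - f' a‖ ≤ L * (s * ‖v‖) := by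
      have := hlip.norm_sub_le (a + s • v) a
      rwa [Real.coe_toNNReal _ hL, add_sub_cancel_left, norm_smul,
        Real.norm_of_nonneg hs.1.le] at this
    have hcs := real_inner_le_norm (f' (a + s • v) - f' a) v
    rw [inner_sub_left] at hcs
    rw [(hφ s).deriv]
    nlinarith [norm_nonneg v]
  have h01 := hanti (Set.left_mem_Icc.mpr zero_le_one) (Set.right_mem_Icc.mpr zero_le_one)
    zero_le_one
  norm_num [φ, v] at h01
  linarith

end Gradient

section StrongConvexity

variable {E : Type*} [NormedAddCommGroup E] [InnerProductSpace ℝ E]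

lemma StrongConvexOn.add_sq_le_of_isMinOn {s : Set E} {m : ℝ} {φ : E → ℝ} {x₀ z : E}
    (hφ : StrongConvexOn s m φ) (hmin : IsMinOn φ s x₀) (hx₀ : x₀ ∈ s) (hz : z ∈ s) :
    φ x₀ + m / 2 * ‖z - x₀‖ ^ 2 ≤ φ z := by
  set D := m / 2 * ‖x₀ - z‖ ^ 2
  have hshrink : ∀ θ ∈ Set.Ioo (0 : ℝ) 1, φ x₀ + (1 - θ) * D ≤ φ z := by
    rintro θ ⟨hθ0, hθ1⟩
    have hmid := hφ.2 hx₀ hz (sub_nonneg.mpr hθ1.le) hθ0.le (sub_add_cancel 1 θ)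
    have hle : φ x₀ ≤ φ _ :=
      hmin (hφ.1 hx₀ hz (sub_nonneg.mpr hθ1.le) hθ0.le (sub_add_cancel 1 θ))
    simp only [smul_eq_mul] at hmid
    have : θ * (φ x₀ + (1 - θ) * D) ≤ θ * φ z := by linear_combination hle + hmid
    exact le_of_mul_le_mul_left this hθ0
  have hlim : Tendsto (fun θ : ℝ => φ x₀ + (1 - θ) * D) (𝓝[>] 0) (𝓝 (φ x₀ + D)) := by
    refine (Continuous.tendsto' (by fun_prop) 0 _ ?_).mono_left nhdsWithin_le_nhds
    simp
  rw [norm_sub_rev]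
  exact le_of_tendsto hlim (eventually_of_mem (Ioo_mem_nhdsGT one_pos) hshrink)

lemma ConvexOn.strongConvexOn_inner_add_sq_add {s : Set E} {P : E → ℝ} (hP : ConvexOn ℝ s P)
    (g w : E) (L : ℝ) :
    StrongConvexOn s L (fun z => ⟪g, z⟫ + L / 2 * ‖z - w‖ ^ 2 + P z) := by
  rw [strongConvexOn_iff_convex]
  have hexpand : (fun z => ⟪g, z⟫ + L / 2 * ‖z - w‖ ^ 2 + P z - L / 2 * ‖z‖ ^ 2)
      = (fun z => ⟪g - L • w, z⟫ + L / 2 * ‖w‖ ^ 2) + P := by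
    funext z
    simp only [Pi.add_apply, norm_sub_sq_real, inner_sub_left, real_inner_smul_left,
      real_inner_comm z w]
    ring
  rw [hexpand]
  exact (((innerₛₗ ℝ (g - L • w)).convexOn hP.1).add_const _).add hP

end StrongConvexity

section pDCAe

variable {E : Type*} [NormedAddCommGroup E] [InnerProductSpace ℝ E] [CompleteSpace E]
  {f : E → ℝ} {f' : E → E} {P₁ P₂ : E → ℝ} {L : ℝ}

/-- One pDCAe step from `a = xᵗ` with extrapolated point `w = yᵗ` and `ξ ∈ ∂P₂(a)` to `b = xᵗ⁺¹`. -/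
lemma pDCAe_step (hL : 0 ≤ L) (hconv : ConvexOn ℝ Set.univ f)
    (hdiff : ∀ x, HasGradientAt f (f' x) x) (hlip : LipschitzWith L.toNNReal f')
    (hP₁ : ConvexOn ℝ Set.univ P₁) {a w ξ b : E} (hξ : ∀ z, P₂ a + ⟪ξ, z - a⟫ ≤ P₂ z)
    (hmin : IsMinOn (fun z => ⟪f' w - ξ, z⟫ + L / 2 * ‖z - w‖ ^ 2 + P₁ z) Set.univ b) :
    f b + P₁ b - P₂ b + L / 2 * ‖b - a‖ ^ 2 ≤ f a + P₁ a - P₂ a + L / 2 * ‖a - w‖ ^ 2 := by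
  have hprox := (hP₁.strongConvexOn_inner_add_sq_add (f' w - ξ) w L).add_sq_le_of_isMinOn hmin
    (Set.mem_univ b) (Set.mem_univ a)
  have hdescent := le_add_inner_add_sq_of_lipschitzWith_gradient hL hdiff hlip w b
  have hgrad := hconv.add_inner_gradient_le hdiff w a
  have hsub := hξ b
  rw [norm_sub_rev a b] at hprox
  simp only [inner_sub_left, inner_sub_right] at hprox hdescent hgrad hsub
  linarith

end pDCAe

/-- Here `x 0` plays the role of `x⁻¹` and `x (t+1)` of `x^t`. -/
theorem stmt4_general {n : ℕ} (L : ℝ) (hL : 0 < L)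
    (f : EuclideanSpace ℝ (Fin n) → ℝ)
    (f' : EuclideanSpace ℝ (Fin n) → EuclideanSpace ℝ (Fin n))
    (hconv : ConvexOn ℝ Set.univ f)
    (hdiff : ∀ x, HasGradientAt f (f' x) x)
    (hlip : LipschitzWith L.toNNReal f')
    (P₁ P₂ : EuclideanSpace ℝ (Fin n) → ℝ)
    (hP₁conv : ConvexOn ℝ Set.univ P₁)
    (hlevel : ∀ r : ℝ, Bornology.IsBounded {z | f z + P₁ z - P₂ z ≤ r})
    (x y ξ : ℕ → EuclideanSpace ℝ (Fin n)) (β : ℕ → ℝ)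
    (hβ : ∀ t, β t ∈ Set.Ico (0 : ℝ) 1)
    (hinit : x 0 = x 1)
    (hξ : ∀ t z, P₂ (x (t+1)) + ⟪ξ t, z - x (t+1)⟫ ≤ P₂ z)
    (hy : ∀ t, y t = x (t+1) + β t • (x (t+1) - x t))
    (hmin : ∀ t z, ⟪f' (y t) - ξ t, x (t+2)⟫ + L / 2 * ‖x (t+2) - y t‖ ^ 2 + P₁ (x (t+2)) ≤
      ⟪f' (y t) - ξ t, z⟫ + L / 2 * ‖z - y t‖ ^ 2 + P₁ z) :
    Bornology.IsBounded (Set.range x) := by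
  have hstep : ∀ t, f (x (t+2)) + P₁ (x (t+2)) - P₂ (x (t+2)) + L / 2 * ‖x (t+2) - x (t+1)‖ ^ 2
      ≤ f (x (t+1)) + P₁ (x (t+1)) - P₂ (x (t+1)) + L / 2 * ‖x (t+1) - x t‖ ^ 2 := by
    intro t
    have hextra : ‖x (t+1) - y t‖ ≤ ‖x (t+1) - x t‖ := by
      rw [hy t, sub_add_cancel_left, norm_neg, norm_smul, Real.norm_of_nonneg (hβ t).1]
      exact mul_le_of_le_one_left (norm_nonneg _) (hβ t).2.le
    calc _ ≤ _ := pDCAe_step hL.le hconv hdiff hlip hP₁conv (hξ t) (fun z _ => hmin t z)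
      _ ≤ _ := by gcongr
  have hmerit : Antitone fun t => f (x (t+1)) + P₁ (x (t+1)) - P₂ (x (t+1))
      + L / 2 * ‖x (t+1) - x t‖ ^ 2 := antitone_nat_of_succ_le hstep
  have hbound : ∀ m, f (x m) + P₁ (x m) - P₂ (x m) ≤ f (x 1) + P₁ (x 1) - P₂ (x 1) := by
    rintro (_ | m)
    · rw [hinit]
    · have hm := hmerit (Nat.zero_le m)
      simp only [zero_add, hinit, sub_self, norm_zero] at hm
      have hgap : 0 ≤ L / 2 * ‖x (m+1) - x m‖ ^ 2 := by positivity
      linarith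
  exact (hlevel _).subset (Set.range_subset_iff.mpr hbound)

/-- pDCAe with level-bounded objective: the iterate sequence is bounded.
Here `x 0` plays the role of `x⁻¹` and `x (t+1)` of `x^t`. -/
theorem stmt4 {n : ℕ} (L : ℝ) (hL : 0 < L)
    (f : EuclideanSpace ℝ (Fin n) → ℝ)
    (f' : EuclideanSpace ℝ (Fin n) → EuclideanSpace ℝ (Fin n))
    (hconv : ConvexOn ℝ Set.univ f)
    (hdiff : ∀ x, HasGradientAt f (f' x) x)
    (hlip : LipschitzWith L.toNNReal f')
    (P₁ P₂ : EuclideanSpace ℝ (Fin n) → ℝ)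
    (hP₁conv : ConvexOn ℝ Set.univ P₁) (hP₁lsc : LowerSemicontinuous P₁)
    (hP₂conv : ConvexOn ℝ Set.univ P₂) (hP₂cont : Continuous P₂)
    (hlevel : ∀ r : ℝ, Bornology.IsBounded {z | f z + P₁ z - P₂ z ≤ r})
    (x y ξ : ℕ → EuclideanSpace ℝ (Fin n)) (β : ℕ → ℝ)
    (hβ : ∀ t, β t ∈ Set.Ico (0 : ℝ) 1)
    (hsup : ∃ c < (1 : ℝ), ∀ t, β t ≤ c)
    (hinit : x 0 = x 1)
    (hξ : ∀ t z, P₂ (x (t+1)) + ⟪ξ t, z - x (t+1)⟫ ≤ P₂ z)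
    (hy : ∀ t, y t = x (t+1) + β t • (x (t+1) - x t))
    (hmin : ∀ t z, ⟪f' (y t) - ξ t, x (t+2)⟫ + L / 2 * ‖x (t+2) - y t‖ ^ 2 + P₁ (x (t+2)) ≤
      ⟪f' (y t) - ξ t, z⟫ + L / 2 * ‖z - y t‖ ^ 2 + P₁ z) :
    Bornology.IsBounded (Set.range x) :=
  stmt4_general L hL f f' hconv hdiff hlip P₁ P₂ hP₁conv hlevel x y ξ β hβ hinit hξ hy hmin
end

section
/- Let F = f + P₁ - P₂ with f smooth convex, P₁ proper closed convex, P₂ continuous convex. If x̄ is a local minimizer of F, then 0 ∈ ∇f(x̄) + ∂P₁(x̄) - ∂P₂(x̄), i.e., x̄ is a stationary point of F. -/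
open scoped RealInnerProductSpace

section aux

variable {E : Type*} [NormedAddCommGroup E] [InnerProductSpace ℝ E] [CompleteSpace E]

/-- Existence of a subgradient for a continuous convex function. -/
lemma exists_subgradient_of_continuous (P : E → ℝ) (hconv : ConvexOn ℝ Set.univ P)
    (hcont : Continuous P) (x : E) :
    ∃ w : E, ∀ z, P x + ⟪w, z - x⟫ ≤ P z := by
  set s : Set (E × ℝ) := {p | P p.1 < p.2} with hs
  have hsopen : IsOpen s := isOpen_lt (hcont.comp continuous_fst) continuous_snd
  have hsconv : Convex ℝ s := by
    rintro ⟨y₁, t₁⟩ h₁ ⟨y₂, t₂⟩ h₂ a b ha hb hab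
    simp only [hs, Set.mem_setOf_eq] at h₁ h₂ ⊢
    have hP := hconv.2 (Set.mem_univ y₁) (Set.mem_univ y₂) ha hb hab
    have : a * P y₁ + b * P y₂ < a * t₁ + b * t₂ := by
      rcases eq_or_lt_of_le ha with h | h
      · have hb1 : b = 1 := by linarith
        simp [← h, hb1]; linarith
      · nlinarith
    calc P (a • y₁ + b • y₂) ≤ a * P y₁ + b * P y₂ := hP
      _ < a * t₁ + b * t₂ := this
  have hxnot : (x, P x) ∉ s := by simp [hs]
  obtain ⟨φ, hφ⟩ := geometric_hahn_banach_open_point hsconv hsopen hxnot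
  set c : ℝ := φ (0, 1) with hc
  have hsplit : ∀ z t, φ (z, t) = φ (z, 0) + t * c := by
    intro z t
    have : (z, t) = (z, (0 : ℝ)) + t • ((0 : E), (1 : ℝ)) := by simp
    rw [this, map_add, map_smul]; ring_nf; rw [hc]; ring
  have key : ∀ z t, P z < t → φ (z, 0) + t * c < φ (x, 0) + P x * c := by
    intro z t h
    have h1 := hφ (z, t) h
    have h2 := hsplit z t
    have h3 := hsplit x (P x)
    linarith
  have hcneg : c < 0 := by
    have := key x (P x + 1) (by linarith)
    nlinarith
  have hcpos : 0 < -c := by linarith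
  have key2 : ∀ z, φ (z, 0) + P z * c ≤ φ (x, 0) + P x * c := by
    intro z
    refine le_of_forall_pos_le_add fun δ hδ => ?_
    have hq : 0 < δ / (-c) := div_pos hδ hcpos
    have h := key z (P z + δ / (-c)) (by linarith)
    have hexp : φ (z, 0) + (P z + δ / (-c)) * c
        = φ (z, 0) + P z * c + (δ / (-c)) * c := by ring
    have hdc : (δ / (-c)) * c = -δ := by field_simp [hcneg.ne]
    rw [hexp, hdc] at h
    linarith
  set ψ : E →L[ℝ] ℝ := φ.comp (ContinuousLinearMap.inl ℝ E ℝ) with hψ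
  set w₀ : E := (InnerProductSpace.toDual ℝ E).symm ψ with hw₀
  have hw₀val : ∀ z, ⟪w₀, z⟫ = φ (z, 0) := by
    intro z
    rw [hw₀]
    exact InnerProductSpace.toDual_symm_apply
  refine ⟨(-c)⁻¹ • w₀, fun z => ?_⟩
  have h2 := key2 z
  have hinner : ⟪(-c)⁻¹ • w₀, z - x⟫ = (-c)⁻¹ * (φ (z, 0) - φ (x, 0)) := by
    rw [real_inner_smul_left, inner_sub_right, hw₀val, hw₀val]
  rw [hinner]
  have h3 : (-c)⁻¹ * (φ (z, 0) - φ (x, 0)) ≤ P z - P x := by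
    rw [inv_mul_le_iff₀ hcpos]
    nlinarith
  linarith

end aux

theorem stmt6 {n : ℕ} (f : EuclideanSpace ℝ (Fin n) → ℝ)
    (f' : EuclideanSpace ℝ (Fin n) → EuclideanSpace ℝ (Fin n))
    (hconv : ConvexOn ℝ Set.univ f)
    (hdiff : ∀ x, HasGradientAt f (f' x) x)
    (P₁ P₂ : EuclideanSpace ℝ (Fin n) → ℝ)
    (hP₁conv : ConvexOn ℝ Set.univ P₁) (hP₁lsc : LowerSemicontinuous P₁)
    (hP₂conv : ConvexOn ℝ Set.univ P₂) (hP₂cont : Continuous P₂)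
    (xbar : EuclideanSpace ℝ (Fin n))
    (hlocmin : ∃ ε > (0 : ℝ), ∀ z, ‖z - xbar‖ < ε →
      f xbar + P₁ xbar - P₂ xbar ≤ f z + P₁ z - P₂ z) :
    ∃ u w : EuclideanSpace ℝ (Fin n),
      (∀ z, P₁ xbar + ⟪u, z - xbar⟫ ≤ P₁ z) ∧
      (∀ z, P₂ xbar + ⟪w, z - xbar⟫ ≤ P₂ z) ∧
      f' xbar + u - w = 0 := by
  obtain ⟨w, hw⟩ := exists_subgradient_of_continuous P₂ hP₂conv hP₂cont xbar
  obtain ⟨ε, hε, hmin⟩ := hlocmin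
  refine ⟨w - f' xbar, w, fun z => ?_, hw, by abel⟩
  set d : EuclideanSpace ℝ (Fin n) := z - xbar with hd
  set g : ℝ → ℝ := fun t => f (xbar + t • d) with hg
  have hderiv : HasDerivAt g ⟪f' xbar, d⟫ 0 := by
    have hline : HasDerivAt (fun t : ℝ => xbar + t • d) d 0 := by
      simpa using ((hasDerivAt_id (0 : ℝ)).smul_const d).const_add xbar
    have hF' : HasFDerivAt f ((InnerProductSpace.toDual ℝ _) (f' xbar))
        (xbar + (0 : ℝ) • d) := by
      simpa using (hdiff xbar).hasFDerivAt
    have hcomp := hF'.comp_hasDerivAt (0 : ℝ) hline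
    simp [InnerProductSpace.toDual_apply_apply] at hcomp; exact hcomp
  have hslope : ∀ t : ℝ, 0 < t → t ≤ 1 → t * ‖d‖ < ε →
      P₁ xbar - P₁ z + ⟪w, d⟫ ≤ (g t - g 0) / t := by
    intro t ht ht1 htε
    have hpt : xbar + t • d = (1 - t) • xbar + t • z := by
      rw [hd]; module
    have hnorm : ‖(xbar + t • d) - xbar‖ < ε := by
      simpa [norm_smul, abs_of_pos ht] using htε
    have hF := hmin (xbar + t • d) hnorm
    have hP1 : P₁ (xbar + t • d) ≤ (1 - t) * P₁ xbar + t * P₁ z := by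
      rw [hpt]
      exact hP₁conv.2 (Set.mem_univ _) (Set.mem_univ _) (by linarith) (le_of_lt ht) (by ring)
    have hP2 : P₂ xbar + ⟪w, (xbar + t • d) - xbar⟫ ≤ P₂ (xbar + t • d) := hw _
    have hsub : (xbar + t • d) - xbar = t • d := by abel
    rw [hsub, real_inner_smul_right] at hP2
    have hg0 : g 0 = f xbar := by simp [hg]
    have hgt : g t = f (xbar + t • d) := rfl
    rw [le_div_iff₀ ht, hg0, hgt]
    nlinarith [hF, hP1, hP2]
  have htend : Filter.Tendsto (fun t => (g t - g 0) / t) (nhdsWithin 0 (Set.Ioi 0))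
      (nhds ⟪f' xbar, d⟫) := by
    have h1 := hasDerivAt_iff_tendsto_slope.mp hderiv
    have hsub : nhdsWithin (0:ℝ) (Set.Ioi 0) ≤ nhdsWithin 0 {(0:ℝ)}ᶜ :=
      nhdsWithin_mono _ (fun t ht => ne_of_gt ht)
    refine (h1.mono_left hsub).congr' ?_
    filter_upwards with t
    simp [slope_def_field]
  have hδpos : 0 < min 1 (ε / (‖d‖ + 1)) := lt_min one_pos (by positivity)
  have hev : ∀ᶠ t in nhdsWithin (0:ℝ) (Set.Ioi 0),
      P₁ xbar - P₁ z + ⟪w, d⟫ ≤ (g t - g 0) / t := by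
    filter_upwards [Ioo_mem_nhdsGT_of_mem ⟨le_refl (0:ℝ), hδpos⟩] with t ht
    have ht1 : t ≤ 1 := le_trans ht.2.le (min_le_left _ _)
    have htε : t * ‖d‖ < ε := by
      have h2 : t < ε / (‖d‖ + 1) := lt_of_lt_of_le ht.2 (min_le_right _ _)
      have h3 : t * (‖d‖ + 1) < ε := (lt_div_iff₀ (by positivity)).mp h2
      nlinarith [ht.1, norm_nonneg d]
    exact hslope t ht.1 ht1 htε
  have hlim : P₁ xbar - P₁ z + ⟪w, d⟫ ≤ ⟪f' xbar, d⟫ := ge_of_tendsto htend hev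
  have hinnerfinal : ⟪w - f' xbar, z - xbar⟫ = ⟪w, d⟫ - ⟪f' xbar, d⟫ := by
    rw [hd, inner_sub_left]
  rw [hinnerfinal]
  linarith
end

section
/- The function P₂(x) = λ Σᵢ ∫₀^{|xᵢ|} [min{θλ, s} - λ]₊ / ((θ-1)λ) ds (the concave part of the SCAD regularizer) is continuously differentiable with ∇ᵢP₂(x) = sign(xᵢ)·[min{θλ, |xᵢ|} - λ]₊/(θ-1), and ∇P₂ is Lipschitz continuous with modulus 1/(θ-1). -/
/-!
By oddness of `g(t) = sign t · [min{θλ, |t|} - λ]₊ / (θ - 1)` (`scadGrad λ θ`), each summand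
`λ ∫₀^{|xᵢ|} [min{θλ, s} - λ]₊ / ((θ - 1)λ) ds` of `P₂` equals the primitive `∫₀^{xᵢ} g`, so `P₂`
is a separable sum of `C¹` functions with gradient `(g(xᵢ))ᵢ`. Moreover `(θ - 1) g` is the
soft-thresholding map at level `λ` clipped to `[-(θ - 1)λ, (θ - 1)λ]`, a composition of
`1`-Lipschitz maps; hence `g`, and with it the coordinatewise map `x ↦ (g(xᵢ))ᵢ` for the Euclidean
norm, is `1/(θ - 1)`-Lipschitz.
-/

noncomputable def scadGrad (lam θ t : ℝ) : ℝ :=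
  Real.sign t * max (min (θ * lam) |t| - lam) 0 / (θ - 1)

section scadGrad

variable {lam θ : ℝ}

lemma scadGrad_neg (t : ℝ) : scadGrad lam θ (-t) = -scadGrad lam θ t := by
  simp only [scadGrad, Real.sign_neg, abs_neg]
  ring

lemma scadGrad_of_nonneg (hlam : 0 ≤ lam) {t : ℝ} (ht : 0 ≤ t) :
    scadGrad lam θ t = max (min (θ * lam) t - lam) 0 / (θ - 1) := by
  rcases ht.eq_or_lt with rfl | ht
  · have : min (θ * lam) 0 - lam ≤ 0 := by linarith [min_le_right (θ * lam) 0]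
    simp [scadGrad, max_eq_right this]
  · simp [scadGrad, Real.sign_of_pos ht, abs_of_pos ht]

lemma scadGrad_eq_clip_softThreshold (hlam : 0 ≤ lam) (hθ : 1 < θ) (t : ℝ) :
    scadGrad lam θ t =
      max (-(θ * lam - lam)) (min (θ * lam - lam) (max (t - lam) (min (t + lam) 0))) /
        (θ - 1) := by
  have : lam ≤ θ * lam := by nlinarith
  unfold scadGrad
  congr 1
  rcases lt_trichotomy t 0 with ht | rfl | ht
  · simp only [Real.sign_of_neg ht, abs_of_neg ht, min_def, max_def]
    split_ifs <;> linarith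
  · simp only [Real.sign_zero, zero_mul, min_def, max_def]
    split_ifs <;> linarith
  · simp only [Real.sign_of_pos ht, abs_of_pos ht, min_def, max_def]
    split_ifs <;> linarith

lemma lipschitzWith_scadGrad (hlam : 0 ≤ lam) (hθ : 1 < θ) :
    LipschitzWith (1 / (θ - 1)).toNNReal (scadGrad lam θ) := by
  have hsoft : LipschitzWith 1 fun t : ℝ => max (t - lam) (min (t + lam) 0) := by
    simpa using (IsometryEquiv.subRight lam).isometry.lipschitz.max
      ((IsometryEquiv.addRight lam).isometry.lipschitz.min_const 0)
  have hclip := (hsoft.const_min (θ * lam - lam)).const_max (-(θ * lam - lam))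
  refine LipschitzWith.of_dist_le_mul fun s t => ?_
  have hθ1 : 0 < θ - 1 := by linarith
  rw [scadGrad_eq_clip_softThreshold hlam hθ, scadGrad_eq_clip_softThreshold hlam hθ,
    Real.dist_eq, ← sub_div, abs_div, abs_of_pos hθ1, Real.coe_toNNReal _ (by positivity),
    one_div_mul_eq_div]
  gcongr
  simpa [Real.dist_eq] using hclip.dist_le_mul s t

end scadGrad

lemma intervalIntegral.integral_zero_neg_of_odd {E : Type*} [NormedAddCommGroup E]
    [NormedSpace ℝ E] {f : ℝ → E} (hf : ∀ s, f (-s) = -f s) (t : ℝ) :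
    ∫ s in (0 : ℝ)..-t, f s = ∫ s in (0 : ℝ)..t, f s := by
  have h := intervalIntegral.integral_comp_neg (a := 0) (b := t) f
  rw [intervalIntegral.integral_congr fun s _ => hf s, intervalIntegral.integral_neg, neg_zero,
    intervalIntegral.integral_symm 0 (-t)] at h
  exact (neg_inj.mp h).symm

lemma intervalIntegral.integral_zero_abs_of_odd {E : Type*} [NormedAddCommGroup E]
    [NormedSpace ℝ E] {f : ℝ → E} (hf : ∀ s, f (-s) = -f s) (t : ℝ) :
    ∫ s in (0 : ℝ)..|t|, f s = ∫ s in (0 : ℝ)..t, f s := by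
  rcases abs_choice t with h | h <;> rw [h]
  exact intervalIntegral.integral_zero_neg_of_odd hf t

lemma mul_integral_abs_eq_integral_scadGrad {lam : ℝ} (θ : ℝ) (hlam : 0 < lam) (t : ℝ) :
    lam * ∫ s in (0 : ℝ)..|t|, max (min (θ * lam) s - lam) 0 / ((θ - 1) * lam) =
      ∫ s in (0 : ℝ)..t, scadGrad lam θ s := by
  rw [← intervalIntegral.integral_zero_abs_of_odd scadGrad_neg,
    ← intervalIntegral.integral_const_mul]
  refine intervalIntegral.integral_congr fun s hs => ?_
  rw [Set.uIcc_of_le (abs_nonneg t)] at hs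
  rw [scadGrad_of_nonneg hlam.le hs.1]
  field_simp

lemma hasGradientAt_sum_comp_apply {ι : Type*} [Fintype ι] {Φ : ι → ℝ → ℝ} {φ' : ι → ℝ}
    {x : EuclideanSpace ℝ ι} (h : ∀ i, HasDerivAt (Φ i) (φ' i) (x i)) :
    HasGradientAt (fun y : EuclideanSpace ℝ ι => ∑ i, Φ i (y i)) (WithLp.toLp 2 φ') x := by
  rw [hasGradientAt_iff_hasFDerivAt]
  have hsum : HasFDerivAt (fun y : EuclideanSpace ℝ ι => ∑ i, Φ i (y i))
      (∑ i, φ' i • EuclideanSpace.proj i) x :=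
    HasFDerivAt.fun_sum fun i _ =>
      (h i).comp_hasFDerivAt x (EuclideanSpace.proj i : EuclideanSpace ℝ ι →L[ℝ] ℝ).hasFDerivAt
  refine hsum.congr_fderiv (ContinuousLinearMap.ext fun y => ?_)
  simp [PiLp.inner_apply, mul_comm]

lemma LipschitzWith.euclideanSpace_map {ι : Type*} [Fintype ι] {K : NNReal} {f : ℝ → ℝ}
    (hf : LipschitzWith K f) :
    LipschitzWith K fun x : EuclideanSpace ℝ ι => WithLp.toLp 2 fun i => f (x i) := by
  refine LipschitzWith.of_dist_le_mul fun x y => ?_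
  rw [EuclideanSpace.dist_eq, EuclideanSpace.dist_eq, ← Real.sqrt_sq K.coe_nonneg,
    ← Real.sqrt_mul (sq_nonneg _), Finset.mul_sum]
  gcongr with i
  simpa [mul_pow] using pow_le_pow_left₀ dist_nonneg (hf.dist_le_mul (x i) (y i)) 2

/-- The concave part of the SCAD regularizer is `C¹` with the given gradient, which is
`1/(θ-1)`-Lipschitz. -/
theorem stmt9 {n : ℕ} (lam θ : ℝ) (hlam : 0 < lam) (hθ : 2 < θ)
    (P₂ : EuclideanSpace ℝ (Fin n) → ℝ)
    (hP₂ : ∀ x, P₂ x = lam * ∑ i,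
      ∫ s in (0:ℝ)..|x i|, max (min (θ * lam) s - lam) 0 / ((θ - 1) * lam))
    (G : EuclideanSpace ℝ (Fin n) → EuclideanSpace ℝ (Fin n))
    (hG : ∀ x i, G x i = Real.sign (x i) * max (min (θ * lam) |x i| - lam) 0 / (θ - 1)) :
    (∀ x, HasGradientAt P₂ (G x) x) ∧ Continuous G ∧
      LipschitzWith (1 / (θ - 1)).toNNReal G := by
  have hlip := lipschitzWith_scadGrad hlam.le (by linarith : 1 < θ)
  have hP₂_eq : P₂ = fun x => ∑ i, ∫ s in (0 : ℝ)..x i, scadGrad lam θ s := funext fun x => by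
    simp only [hP₂, Finset.mul_sum, mul_integral_abs_eq_integral_scadGrad θ hlam]
  have hG_eq : G = fun x => WithLp.toLp 2 fun i => scadGrad lam θ (x i) :=
    funext fun x => PiLp.ext fun i => hG x i
  subst hP₂_eq hG_eq
  exact ⟨fun x => hasGradientAt_sum_comp_apply fun i =>
      (hlip.continuous.integral_hasStrictDerivAt 0 (x i)).hasDerivAt,
    hlip.euclideanSpace_map.continuous, hlip.euclideanSpace_map⟩
end

section
/- Let {S_t} be a nonincreasing sequence of nonnegative reals with S_t → 0, and suppose there exist C₁ > 0 and r ≥ 1 such that S_t ≤ C₁(S_{t-2} - S_t)^r + (S_{t-2} - S_t) for all sufficiently large t. Then there exist c > 0, η ∈ (0,1) and t₁ such that S_t ≤ c·η^t for all t ≥ t₁. -/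
/-!
Once `S t - S (t+2) ≤ 1`, the power term is dominated by the linear one (as `r ≥ 1`), so the
recursion becomes `S (t+2) ≤ (C₁+1) (S t - S (t+2))`, i.e. `S (t+2) ≤ ρ S t` with
`ρ = (C₁+1)/(C₁+2) < 1`. Iterating along even and odd indices gives decay like `(√ρ)^t`.
-/

open Filter

lemma le_mul_of_le_rpow_sub_add_sub {a b C r : ℝ} (hC : 0 ≤ C) (hr : 1 ≤ r)
    (hba : b ≤ a) (hab : a - b ≤ 1) (h : b ≤ C * (a - b) ^ r + (a - b)) :
    b ≤ (C + 1) / (C + 2) * a := by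
  have hpow : (a - b) ^ r ≤ a - b := Real.rpow_le_self_of_le_one (by linarith) hab hr
  have hlin : b ≤ (C + 1) * (a - b) := by nlinarith
  rw [div_mul_eq_mul_div, le_div_iff₀ (by linarith)]
  linarith

lemma le_pow_mul_of_two_step_contraction {S : ℕ → ℝ} {ρ : ℝ} {T : ℕ} (hρ : 0 ≤ ρ)
    (hS : ∀ t ≥ T, S (t + 2) ≤ ρ * S t) (k : ℕ) : S (T + 2 * k) ≤ ρ ^ k * S T := by
  induction k with
  | zero => simp
  | succ k ih =>
    calc S (T + 2 * (k + 1)) = S (T + 2 * k + 2) := by ring_nf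
      _ ≤ ρ * S (T + 2 * k) := hS _ (by omega)
      _ ≤ ρ * (ρ ^ k * S T) := mul_le_mul_of_nonneg_left ih hρ
      _ = ρ ^ (k + 1) * S T := by ring

lemma exists_le_mul_pow_of_two_step_contraction {S : ℕ → ℝ} (hanti : Antitone S)
    (hnn : ∀ t, 0 ≤ S t) {ρ : ℝ} (hρ₀ : 0 < ρ) (hρ₁ : ρ < 1) {T : ℕ}
    (hS : ∀ t ≥ T, S (t + 2) ≤ ρ * S t) :
    ∃ c > (0 : ℝ), ∃ η ∈ Set.Ioo (0 : ℝ) 1, ∃ t₁, ∀ t ≥ t₁, S t ≤ c * η ^ t := by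
  set η := Real.sqrt ρ
  have hη₀ : 0 < η := Real.sqrt_pos.mpr hρ₀
  have hη₁ : η < 1 := (Real.sqrt_lt' one_pos).mpr (by simpa using hρ₁)
  refine ⟨(S T + 1) / η ^ (T + 1), by have := hnn T; positivity, η, ⟨hη₀, hη₁⟩, T, ?_⟩
  intro t ht
  set k := (t - T) / 2
  have hρk : ρ ^ k * η ^ (T + 1) ≤ η ^ t := by
    rw [← Real.sq_sqrt hρ₀.le, ← pow_mul, ← pow_add]
    exact pow_le_pow_of_le_one hη₀.le hη₁.le (by omega)
  have hρk' : ρ ^ k ≤ η ^ t / η ^ (T + 1) := by rwa [le_div_iff₀ (by positivity)]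
  calc S t ≤ S (T + 2 * k) := hanti (by omega)
    _ ≤ ρ ^ k * S T := le_pow_mul_of_two_step_contraction hρ₀.le hS k
    _ ≤ η ^ t / η ^ (T + 1) * (S T + 1) :=
        mul_le_mul hρk' (by linarith) (hnn T) (by positivity)
    _ = (S T + 1) / η ^ (T + 1) * η ^ t := by ring

theorem stmt15_general (S : ℕ → ℝ) (hmono : ∀ t, S (t+1) ≤ S t)
    (hlim : Filter.Tendsto S Filter.atTop (nhds 0))
    (C₁ r : ℝ) (hC : 0 < C₁) (hr : 1 ≤ r)
    (hrec : ∃ T, ∀ t ≥ T, S (t+2) ≤ C₁ * (S t - S (t+2)) ^ r + (S t - S (t+2))) :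
    ∃ c > (0 : ℝ), ∃ η ∈ Set.Ioo (0 : ℝ) 1, ∃ t₁, ∀ t ≥ t₁, S t ≤ c * η ^ t := by
  obtain ⟨T, hT⟩ := hrec
  have hanti : Antitone S := antitone_nat_of_succ_le hmono
  have hnn : ∀ t, 0 ≤ S t := hanti.le_of_tendsto hlim
  obtain ⟨T₁, hT₁⟩ := (hlim.eventually_le_const one_pos).exists_forall_of_atTop
  refine exists_le_mul_pow_of_two_step_contraction hanti hnn (ρ := (C₁ + 1) / (C₁ + 2))
    (by positivity) (by rw [div_lt_one (by linarith)]; linarith) (T := max T T₁) ?_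
  intro t ht
  have hle : S (t + 2) ≤ S t := hanti (by omega)
  have hsub : S t - S (t + 2) ≤ 1 := by
    linarith [hT₁ t (le_of_max_le_right ht), hnn (t + 2)]
  exact le_mul_of_le_rpow_sub_add_sub hC.le hr hle hsub (hT t (le_of_max_le_left ht))

theorem stmt15 (S : ℕ → ℝ) (hnn : ∀ t, 0 ≤ S t) (hmono : ∀ t, S (t+1) ≤ S t)
    (hlim : Filter.Tendsto S Filter.atTop (nhds 0))
    (C₁ r : ℝ) (hC : 0 < C₁) (hr : 1 ≤ r)
    (hrec : ∃ T, ∀ t ≥ T, S (t+2) ≤ C₁ * (S t - S (t+2)) ^ r + (S t - S (t+2))) :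
    ∃ c > (0 : ℝ), ∃ η ∈ Set.Ioo (0 : ℝ) 1, ∃ t₁, ∀ t ≥ t₁, S t ≤ c * η ^ t :=
  stmt15_general S hmono hlim C₁ r hC hr hrec
end

section
/- Let {Δ_t} be a nonincreasing sequence of positive reals and suppose there exist C₂ > 0 and p > 1 such that Δ_t^p ≤ C₂(Δ_{t-1} - Δ_t) for all sufficiently large t. Then there exists C₃ > 0 such that Δ_t ≤ C₃·t^{-1/(p-1)} for all sufficiently large t. -/
/-!
Put `a = p - 1`. Beyond `T` the recursion forces `Δ` to decrease strictly, and `Δ_t ^ (-a)` grows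
by a fixed `c > 0` at every step. If `Δ_{t+1} ≥ Δ_t / 2`, this follows from the recursion together
with `1 - u ^ a ≥ min a 1 * (1 - u)` for `u = Δ_{t+1} / Δ_t`; if `Δ_{t+1} < Δ_t / 2`, the power
`Δ ^ (-a)` is multiplied by at least `2 ^ a`, which is an increase of at least
`(2 ^ a - 1) * Δ_T ^ (-a)`. Hence `Δ_{T+n} ^ (-a) ≥ n c`, and inverting gives
`Δ_t = O(t ^ (-1 / a))`.
-/

open Real

lemma min_mul_one_sub_le_one_sub_rpow {a u : ℝ} (ha : 0 ≤ a) (hu : 0 < u) (hu1 : u ≤ 1) :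
    min a 1 * (1 - u) ≤ 1 - u ^ a := by
  rcases le_total a 1 with h | h
  · have hb := rpow_one_add_le_one_add_mul_self (s := u - 1) (by linarith) ha h
    rw [add_sub_cancel] at hb
    rw [min_eq_left h]
    linarith
  · have hb := rpow_le_rpow_of_exponent_ge hu hu1 h
    rw [rpow_one] at hb
    rw [min_eq_right h]
    linarith

lemma lt_of_rpow_le_mul_sub {q C x y : ℝ} (hC : 0 < C) (hy : 0 < y)
    (h : y ^ q ≤ C * (x - y)) : y < x := by
  have := rpow_pos_of_pos hy q
  by_contra! hxy
  nlinarith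

lemma min_div_le_rpow_neg_sub_rpow_neg {a C x y : ℝ} (ha : 0 < a) (hC : 0 < C) (hy : 0 < y)
    (hxy : x ≤ 2 * y) (h : y ^ (a + 1) ≤ C * (x - y)) :
    min a 1 / (2 * C) ≤ y ^ (-a) - x ^ (-a) := by
  have hyx := lt_of_rpow_le_mul_sub hC hy h
  have hx : 0 < x := hy.trans hyx
  have hm : 0 < min a 1 := lt_min ha one_pos
  have hya : y ^ (-a) * y ^ (a + 1) = y := by
    rw [← rpow_add hy, neg_add_cancel_left, rpow_one]
  calc min a 1 / (2 * C) ≤ min a 1 * (y / (C * x)) := by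
        rw [div_eq_mul_one_div]
        refine mul_le_mul_of_nonneg_left ?_ hm.le
        rw [div_le_div_iff₀ (by positivity) (by positivity)]
        nlinarith
    _ = min a 1 * (y ^ (-a) * (y ^ (a + 1) / C) / x) := by
        congr 1
        rw [← mul_div_assoc, hya, div_div]
    _ ≤ min a 1 * (y ^ (-a) * (x - y) / x) := by
        gcongr
        rwa [div_le_iff₀' hC]
    _ = y ^ (-a) * (min a 1 * (1 - y / x)) := by field_simp
    _ ≤ y ^ (-a) * (1 - (y / x) ^ a) := by
        gcongr
        exact min_mul_one_sub_le_one_sub_rpow ha.le (div_pos hy hx) ((div_le_one hx).2 hyx.le)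
    _ = y ^ (-a) - x ^ (-a) := by
        rw [div_rpow hy.le hx.le, rpow_neg hy.le, rpow_neg hx.le]
        have : y ^ a ≠ 0 := (rpow_pos_of_pos hy a).ne'
        field_simp

lemma two_rpow_mul_rpow_neg_le_rpow_neg {a x y : ℝ} (ha : 0 ≤ a) (hy : 0 < y) (hxy : 2 * y ≤ x) :
    2 ^ a * x ^ (-a) ≤ y ^ (-a) := by
  calc 2 ^ a * x ^ (-a) = (x / 2) ^ (-a) := by
        rw [div_rpow (by linarith) zero_le_two, rpow_neg zero_le_two, div_inv_eq_mul, mul_comm]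
    _ ≤ y ^ (-a) := rpow_le_rpow_of_nonpos hy (by linarith) (neg_nonpos.2 ha)

lemma rpow_neg_add_le_rpow_neg {a C M x y : ℝ} (ha : 0 < a) (hC : 0 < C) (hy : 0 < y)
    (hxM : x ≤ M) (h : y ^ (a + 1) ≤ C * (x - y)) :
    x ^ (-a) + min (min a 1 / (2 * C)) ((2 ^ a - 1) * M ^ (-a)) ≤ y ^ (-a) := by
  rcases le_total x (2 * y) with hxy | hxy
  · linarith [min_le_left (min a 1 / (2 * C)) ((2 ^ a - 1) * M ^ (-a)),
      min_div_le_rpow_neg_sub_rpow_neg ha hC hy hxy h]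
  · have hx : 0 < x := by linarith
    have h2 : 1 ≤ (2 : ℝ) ^ a := one_le_rpow one_le_two ha.le
    have hMx : M ^ (-a) ≤ x ^ (-a) := rpow_le_rpow_of_nonpos hx hxM (neg_nonpos.2 ha.le)
    calc x ^ (-a) + min (min a 1 / (2 * C)) ((2 ^ a - 1) * M ^ (-a))
        ≤ x ^ (-a) + (2 ^ a - 1) * x ^ (-a) := by
          gcongr
          exact (min_le_right _ _).trans (by gcongr)
      _ = 2 ^ a * x ^ (-a) := by ring
      _ ≤ y ^ (-a) := two_rpow_mul_rpow_neg_le_rpow_neg ha.le hy hxy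

lemma add_nat_mul_le_of_add_le_succ {f : ℕ → ℝ} {c : ℝ} (h : ∀ n, f n + c ≤ f (n + 1)) (n : ℕ) :
    f 0 + n * c ≤ f n := by
  induction n with
  | zero => simp
  | succ n ih => push_cast; linarith [h n]

lemma exists_pos_nat_mul_le_rpow_neg {Δ : ℕ → ℝ} {a C : ℝ} {T : ℕ} (hpos : ∀ t, 0 < Δ t)
    (ha : 0 < a) (hC : 0 < C) (hrec : ∀ t ≥ T, Δ (t + 1) ^ (a + 1) ≤ C * (Δ t - Δ (t + 1))) :
    ∃ c > 0, ∀ n : ℕ, n * c ≤ Δ (T + n) ^ (-a) := by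
  have hanti : Antitone fun n ↦ Δ (n + T) :=
    antitone_add_nat_of_succ_le fun t ht ↦ (lt_of_rpow_le_mul_sub hC (hpos _) (hrec t ht)).le
  set c := min (min a 1 / (2 * C)) ((2 ^ a - 1) * Δ T ^ (-a))
  have hstep (k : ℕ) : Δ (T + k) ^ (-a) + c ≤ Δ (T + (k + 1)) ^ (-a) :=
    rpow_neg_add_le_rpow_neg ha hC (hpos _) (by simpa [add_comm] using hanti k.zero_le)
      (hrec _ (Nat.le_add_right T k))
  have hΔT := rpow_pos_of_pos (hpos T) (-a)
  refine ⟨c, lt_min (by positivity) ?_, fun n ↦ ?_⟩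
  · nlinarith [one_lt_rpow one_lt_two ha]
  · have hgrowth := add_nat_mul_le_of_add_le_succ hstep n
    rw [add_zero] at hgrowth
    linarith

lemma exists_le_mul_rpow_of_nat_mul_le_rpow_neg {Δ : ℕ → ℝ} {a c : ℝ} {T : ℕ}
    (hpos : ∀ t, 0 < Δ t) (ha : 0 < a) (hc : 0 < c) (h : ∀ n : ℕ, n * c ≤ Δ (T + n) ^ (-a)) :
    ∃ C₃ > (0 : ℝ), ∃ T', ∀ t ≥ T', Δ t ≤ C₃ * (t : ℝ) ^ (-(1 / a)) := by
  refine ⟨(c / 2) ^ (-(1 / a)), by positivity, 2 * T + 1, fun t ht ↦ ?_⟩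
  have ht' : (2 * T + 1 : ℝ) ≤ t := by exact_mod_cast ht
  have hgrowth : c / 2 * t ≤ Δ t ^ (-a) := by
    have := h (t - T)
    rw [Nat.add_sub_cancel' (by omega), Nat.cast_sub (by omega)] at this
    nlinarith
  rw [← mul_rpow (by positivity) (by positivity), one_div, ← inv_neg]
  exact (le_rpow_inv_iff_of_neg (hpos t) (by nlinarith) (by linarith)).2 hgrowth

theorem stmt16_general (Δ : ℕ → ℝ) (hpos : ∀ t, 0 < Δ t)
    (C₂ p : ℝ) (hC : 0 < C₂) (hp : 1 < p)
    (hrec : ∃ T, ∀ t ≥ T, Δ (t+1) ^ p ≤ C₂ * (Δ t - Δ (t+1))) :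
    ∃ C₃ > (0 : ℝ), ∃ T', ∀ t ≥ T', Δ t ≤ C₃ * (t : ℝ) ^ (-(1 / (p - 1))) := by
  obtain ⟨T, hT⟩ := hrec
  have ha : 0 < p - 1 := sub_pos.2 hp
  obtain ⟨c, hc, hgrowth⟩ := exists_pos_nat_mul_le_rpow_neg hpos ha hC (T := T)
    (by simpa only [sub_add_cancel] using hT)
  exact exists_le_mul_rpow_of_nat_mul_le_rpow_neg hpos ha hc hgrowth

theorem stmt16 (Δ : ℕ → ℝ) (hpos : ∀ t, 0 < Δ t) (hmono : ∀ t, Δ (t+1) ≤ Δ t)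
    (C₂ p : ℝ) (hC : 0 < C₂) (hp : 1 < p)
    (hrec : ∃ T, ∀ t ≥ T, Δ (t+1) ^ p ≤ C₂ * (Δ t - Δ (t+1))) :
    ∃ C₃ > (0 : ℝ), ∃ T', ∀ t ≥ T', Δ t ≤ C₃ * (t : ℝ) ^ (-(1 / (p - 1))) :=
  stmt16_general Δ hpos C₂ p hC hp hrec
end
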